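/- Under the hypotheses of the previous statement (X with bimonotone basis, lower f-estimate with f(n)=log₂(n+1), and R.I.S. sums of length m with constant 1+ε₀ bounded by 2m f(m)⁻¹), for every ε > 0 and every m ∈ ℕ with f(m) ≥ 24/ε, if y₁ < ⋯ < y_m is a R.I.S. with constant 1+ε₀ and z₁,…,z_m are as in the previous statement, then ‖∑_{i=1}^m yᵢ‖ ≤ ε ‖∑_{i=1}^m zᵢ‖; hence (yᵢ)_{i=1}^m is not ε⁻¹-equivalent to (zᵢ)_{i=1}^m. -/
import Mathlib


open scoped BigOperators Classical

noncomputable section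

section Prelude

variable {X : Type*} [NormedAddCommGroup X] [NormedSpace ℝ X]

/-- The vector with finitely supported coefficients `c` with respect to the sequence `e`. -/
def vecOf (e : ℕ → X) (c : ℕ →₀ ℝ) : X := c.sum fun n a => a • e n

/-- `c < d` : the supports of `c` and `d` are successive. -/
def FsuppLt (c d : ℕ →₀ ℝ) : Prop := ∀ a ∈ c.support, ∀ b ∈ d.support, a < b

/-- The Gowers–Maurey function `f(n) = log₂(n+1)`. -/
def flog (n : ℕ) : ℝ := Real.logb 2 ((n : ℝ) + 1)

/-- Support of a functional with respect to the basis `e` (via biorthogonal functionals). -/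
def fsupp (e : ℕ → X) (f : X →L[ℝ] ℝ) : Set ℕ := {n | f (e n) ≠ 0}

/-- Bimonotonicity of the basis `e`, expressed on finitely supported vectors:
projections onto intervals are contractive. -/
def Bimonotone (e : ℕ → X) : Prop :=
  ∀ (c : ℕ →₀ ℝ) (a b : ℕ), ‖vecOf e (c.filter fun n => n ∈ Finset.Icc a b)‖ ≤ ‖vecOf e c‖

/-- Lower `f`-estimate for a general function `f`. -/
def LowerEst (e : ℕ → X) (f : ℝ → ℝ) : Prop :=
  ∀ (n : ℕ) (c : Fin n → ℕ →₀ ℝ), (∀ i j : Fin n, i < j → FsuppLt (c i) (c j)) →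
    (1 / f (n : ℝ)) * ∑ i, ‖vecOf e (c i)‖ ≤ ‖∑ i, vecOf e (c i)‖

/-- Lower `f`-estimate with `f(n) = log₂(n+1)`. -/
def LowerFEst (e : ℕ → X) : Prop :=
  ∀ (n : ℕ) (c : Fin n → ℕ →₀ ℝ), (∀ i j : Fin n, i < j → FsuppLt (c i) (c j)) →
    (1 / flog n) * ∑ i, ‖vecOf e (c i)‖ ≤ ‖∑ i, vecOf e (c i)‖

/-- `Y` embeds isomorphically into `Z` (linear isomorphism onto its image). -/
def Embeds (Y Z : Type*) [NormedAddCommGroup Y] [NormedSpace ℝ Y]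
    [NormedAddCommGroup Z] [NormedSpace ℝ Z] : Prop :=
  ∃ T : Y →L[ℝ] Z, ∃ c : ℝ, 0 < c ∧ ∀ y, c * ‖y‖ ≤ ‖T y‖

/-- `Y` embeds into `Z` with constant `K` (i.e. `‖T‖ ⬝ ‖T⁻¹‖ ≤ K` after normalisation). -/
def EmbedsWithConst (K : ℝ) (Y Z : Type*) [NormedAddCommGroup Y] [NormedSpace ℝ Y]
    [NormedAddCommGroup Z] [NormedSpace ℝ Z] : Prop :=
  ∃ T : Y →L[ℝ] Z, ∀ y, ‖y‖ ≤ ‖T y‖ ∧ ‖T y‖ ≤ K * ‖y‖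

/-- The closed span `[eₙ : n ∉ S]`. -/
def spanCompl (e : ℕ → X) (S : Set ℕ) : Submodule ℝ X :=
  (Submodule.span ℝ (e '' Sᶜ)).topologicalClosure

/-- `Y` is tight in the basic sequence `e`. -/
def TightIn (e : ℕ → X) (Y : Type*) [NormedAddCommGroup Y] [NormedSpace ℝ Y] : Prop :=
  ∃ I : ℕ → Finset ℕ, (∀ i j : ℕ, i < j → ∀ a ∈ I i, ∀ b ∈ I j, a < b) ∧
    ∀ A : Set ℕ, A.Infinite → ¬ Embeds Y ↥(spanCompl e (⋃ i ∈ A, (I i : Set ℕ)))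

/-- The basis `e` is tight: every infinite-dimensional Banach space is tight in it. -/
def TightBasis (e : ℕ → X) : Prop :=
  ∀ (Y : Type) [NormedAddCommGroup Y] [NormedSpace ℝ Y] [CompleteSpace Y],
    ¬ FiniteDimensional ℝ Y → TightIn e Y

end Prelude

/-- Two finite sequences are `M`-equivalent. -/
def SeqEquiv {X : Type} [NormedAddCommGroup X] [NormedSpace ℝ X]
    {n : ℕ} (M : ℝ) (y z : Fin n → X) : Prop :=
  ∃ c : ℝ, 0 < c ∧ ∀ a : Fin n → ℝ,
    c * ‖∑ i, a i • y i‖ ≤ ‖∑ i, a i • z i‖ ∧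
    ‖∑ i, a i • z i‖ ≤ M * c * ‖∑ i, a i • y i‖

section Aux

variable {X : Type*} [NormedAddCommGroup X] [NormedSpace ℝ X]

lemma vecOf_smul (e : ℕ → X) (a : ℝ) (c : ℕ →₀ ℝ) :
    vecOf e (a • c) = a • vecOf e c := by
  unfold vecOf
  rw [Finsupp.sum_smul_index' (fun i => zero_smul ℝ (e i)), Finsupp.smul_sum]
  simp [smul_smul]

lemma lower_block (e : ℕ → X) (hlf : LowerFEst e) (x : ℕ → ℕ →₀ ℝ)
    (hx : ∀ i j : ℕ, i < j → FsuppLt (x i) (x j)) (S : Finset ℕ) :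
    (1 / flog S.card) * ∑ i ∈ S, ‖vecOf e (x i)‖ ≤ ‖∑ i ∈ S, vecOf e (x i)‖ := by
  classical
  set k := S.card with hk
  let φ := S.orderIsoOfFin hk.symm
  have hnorm : ∑ i : Fin k, ‖vecOf e (x (φ i : ℕ))‖ = ∑ i ∈ S, ‖vecOf e (x i)‖ := by
    rw [← Finset.sum_coe_sort S (fun a => ‖vecOf e (x a)‖)]
    exact Equiv.sum_comp φ.toEquiv (fun a : S => ‖vecOf e (x (a : ℕ))‖)
  have hvec : ∑ i : Fin k, vecOf e (x (φ i : ℕ)) = ∑ i ∈ S, vecOf e (x i) := by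
    rw [← Finset.sum_coe_sort S (fun a => vecOf e (x a))]
    exact Equiv.sum_comp φ.toEquiv (fun a : S => vecOf e (x (a : ℕ)))
  have := hlf k (fun i => x (φ i : ℕ)) (by
    intro i j hij
    exact hx _ _ (by exact_mod_cast φ.lt_iff_lt.mpr hij))
  rw [hnorm, hvec] at this
  exact this

lemma flog_pos {k : ℕ} (hk : 1 ≤ k) : 0 < flog k := by
  unfold flog
  apply Real.logb_pos (by norm_num)
  have : (1 : ℝ) ≤ (k : ℝ) := by exact_mod_cast hk
  linarith

end Aux

/-- under the hypotheses of Statement 17, if moreover `f(m) ≥ 24/ε` and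
`y₁ < ⋯ < y_m` is a R.I.S. (with the upper bound `‖∑ yᵢ‖ ≤ 2m f(m)⁻¹`), then
`‖∑ yᵢ‖ ≤ ε ‖∑ zᵢ‖` and `(yᵢ)` is not `ε⁻¹`-equivalent to `(zᵢ)`. -/
theorem stmt18 {X : Type} [NormedAddCommGroup X] [NormedSpace ℝ X]
    (e : ℕ → X) (hbm : Bimonotone e) (hlf : LowerFEst e)
    (ε : ℝ) (hε : 0 < ε)
    (m n : ℕ) (hm : 1 ≤ m) (hn : m ^ 10 ≤ n)
    (hfm : 24 / ε ≤ flog m)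
    (y : Fin m → ℕ →₀ ℝ) (hy1 : ∀ i, ‖vecOf e (y i)‖ = 1)
    (hysucc : ∀ i j : Fin m, i < j → FsuppLt (y i) (y j))
    (hyRIS : ‖∑ i, vecOf e (y i)‖ ≤ 2 * m * (flog m)⁻¹)
    (x : ℕ → ℕ →₀ ℝ) (hx1 : ∀ i, ‖vecOf e (x i)‖ = 1)
    (hxsucc : ∀ i j : ℕ, i < j → FsuppLt (x i) (x j))
    (E : Fin m → Finset ℕ)
    (hEsucc : ∀ i j : Fin m, i < j → ∀ a ∈ E i, ∀ b ∈ E j, a < b)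
    (hEpart : Finset.univ.biUnion E = Finset.Icc 1 n)
    (hEcard : ∀ j, |((E j).card : ℝ) - (n : ℝ) / m| ≤ 1)
    (hupper : ∀ j, ‖∑ i ∈ E j, vecOf e (x i)‖ ≤ 2 * n * (flog n)⁻¹ / m) :
    ‖∑ i, vecOf e (y i)‖ ≤
        ε * ‖∑ j : Fin m, ‖∑ i ∈ E j, vecOf e (x i)‖⁻¹ • ∑ i ∈ E j, vecOf e (x i)‖ ∧
    ¬ SeqEquiv ε⁻¹ (fun i => vecOf e (y i))
        (fun j : Fin m => ‖∑ i ∈ E j, vecOf e (x i)‖⁻¹ • ∑ i ∈ E j, vecOf e (x i)) := by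
  classical
  have hm0 : 0 < m := hm
  have hm' : (1:ℝ) ≤ (m:ℝ) := by exact_mod_cast hm
  have hn1 : 1 ≤ n := le_trans (Nat.one_le_iff_ne_zero.mpr (by positivity)) hn
  have hn' : (1:ℝ) ≤ (n:ℝ) := by exact_mod_cast hn1
  have hflogn : 0 < flog n := flog_pos hn1
  have hflogm : 0 < flog m := flog_pos hm
  -- notation
  set w : Fin m → X := fun j => ∑ i ∈ E j, vecOf e (x i) with hwdef
  set lam : Fin m → ℝ := fun j => ‖w j‖⁻¹ with hlamdef
  -- disjointness of blocks
  have hdisj : ∀ i j : Fin m, i ≠ j → Disjoint (E i) (E j) := by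
    intro i j hij
    rw [Finset.disjoint_left]
    intro a hai haj
    rcases lt_or_gt_of_ne hij with h | h
    · exact lt_irrefl a (hEsucc i j h a hai a haj)
    · exact lt_irrefl a (hEsucc j i h a haj a hai)
  have hcardsum : ∑ j, (E j).card = n := by
    rw [← Finset.card_biUnion (fun i _ j _ h => hdisj i j h), hEpart, Nat.card_Icc]
    omega
  -- each block is nonempty
  have hne : ∀ j, 1 ≤ (E j).card := by
    intro j
    by_cases hm1 : m = 1
    · subst hm1
      have huniv : (Finset.univ : Finset (Fin 1)) = {j} := by
        apply Finset.eq_singleton_iff_unique_mem.mpr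
        exact ⟨Finset.mem_univ _, fun b _ => Subsingleton.elim b j⟩
      have : E j = Finset.Icc 1 n := by
        rw [← hEpart, huniv, Finset.singleton_biUnion]
      rw [this, Nat.card_Icc]; omega
    · have hm2 : 2 ≤ m := by omega
      have hpow : 2 * m ≤ n := by
        have h9 : 2 ≤ m ^ 9 :=
          le_trans (by norm_num : (2:ℕ) ≤ 2 ^ 9) (Nat.pow_le_pow_left hm2 9)
        calc 2 * m ≤ m ^ 9 * m := Nat.mul_le_mul_right m h9
          _ = m ^ 10 := by ring
          _ ≤ n := hn
      have hpow' : 2 * (m:ℝ) ≤ (n:ℝ) := by exact_mod_cast hpow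
      have h1 := hEcard j
      rw [abs_le] at h1
      have hm0' : (0:ℝ) < (m:ℝ) := by positivity
      have h2 : (2:ℝ) ≤ (n:ℝ)/(m:ℝ) := by
        rw [le_div_iff₀ hm0']; linarith
      have : (1:ℝ) ≤ ((E j).card : ℝ) := by linarith
      exact_mod_cast this
  -- blocks have positive norm
  have hwpos : ∀ j, 0 < ‖w j‖ := by
    intro j
    have hb := lower_block e hlf x hxsucc (E j)
    have hsum1 : ∑ i ∈ E j, ‖vecOf e (x i)‖ = ((E j).card : ℝ) := by
      simp [hx1]
    rw [hsum1] at hb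
    have hcpos : (0:ℝ) < ((E j).card : ℝ) := by exact_mod_cast hne j
    have hfpos : 0 < flog (E j).card := flog_pos (hne j)
    calc (0:ℝ) < (1 / flog (E j).card) * ((E j).card : ℝ) := by positivity
      _ ≤ ‖w j‖ := hb
  have hlampos : ∀ j, 0 < lam j := fun j => inv_pos.mpr (hwpos j)
  have hz1 : ∀ j, ‖lam j • w j‖ = 1 := by
    intro j
    rw [norm_smul, Real.norm_eq_abs, hlamdef, abs_of_pos (hlampos j),
      inv_mul_cancel₀ (hwpos j).ne']
  -- lower bound on lam
  have hlamlb : ∀ j, (m:ℝ) * flog n / (2*(n:ℝ)) ≤ lam j := by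
    intro j
    have hu := hupper j
    have hbpos : (0:ℝ) < 2*(n:ℝ)*(flog n)⁻¹/(m:ℝ) := by positivity
    have hinv : (2*(n:ℝ)*(flog n)⁻¹/(m:ℝ))⁻¹ ≤ lam j := by
      exact inv_anti₀ (hwpos j) hu
    have heq : (2*(n:ℝ)*(flog n)⁻¹/(m:ℝ))⁻¹ = (m:ℝ) * flog n / (2*(n:ℝ)) := by
      field_simp
    rwa [heq] at hinv
  -- the coefficient function
  set lamfun : ℕ → ℝ := fun i => ∑ j, if i ∈ E j then lam j else 0 with hlamfundef
  have hlamfun : ∀ j : Fin m, ∀ i ∈ E j, lamfun i = lam j := by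
    intro j i hi
    rw [hlamfundef]
    refine Finset.sum_eq_single j (fun b _ hb => ?_) (fun hj => absurd (Finset.mem_univ j) hj)
      |>.trans (if_pos hi)
    rw [if_neg]
    exact fun hib => (Finset.disjoint_left.mp (hdisj b j hb)) hib hi
  have hlamfun_nonneg : ∀ i, 0 ≤ lamfun i := by
    intro i
    apply Finset.sum_nonneg
    intro j _
    split
    · exact (hlampos j).le
    · exact le_refl 0
  -- the scaled vectors
  set x' : ℕ → ℕ →₀ ℝ := fun i => lamfun i • x i with hx'def
  have hx'succ : ∀ i j : ℕ, i < j → FsuppLt (x' i) (x' j) := by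
    intro i j hij a ha b hb
    exact hxsucc i j hij a (Finsupp.support_smul ha) b (Finsupp.support_smul hb)
  have hvecx' : ∀ i, vecOf e (x' i) = lamfun i • vecOf e (x i) := fun i => vecOf_smul e _ _
  have hb := lower_block e hlf x' hx'succ (Finset.Icc 1 n)
  have hcard : (Finset.Icc 1 n).card = n := by rw [Nat.card_Icc]; omega
  rw [hcard] at hb
  -- identify the sum with ∑ z
  have hZeq : ∑ i ∈ Finset.Icc 1 n, vecOf e (x' i) = ∑ j, lam j • w j := by
    rw [← hEpart, Finset.sum_biUnion (fun i _ j _ h => hdisj i j h)]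
    refine Finset.sum_congr rfl (fun j _ => ?_)
    rw [hwdef, Finset.smul_sum]
    refine Finset.sum_congr rfl (fun i hi => ?_)
    rw [hvecx', hlamfun j i hi]
  have hNeq : ∑ i ∈ Finset.Icc 1 n, ‖vecOf e (x' i)‖ = ∑ j, lam j * ((E j).card : ℝ) := by
    rw [← hEpart, Finset.sum_biUnion (fun i _ j _ h => hdisj i j h)]
    refine Finset.sum_congr rfl (fun j _ => ?_)
    have : ∀ i ∈ E j, ‖vecOf e (x' i)‖ = lam j := by
      intro i hi
      rw [hvecx', norm_smul, Real.norm_eq_abs, hlamfun j i hi, hx1,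
        abs_of_pos (hlampos j), mul_one]
    rw [Finset.sum_congr rfl this, Finset.sum_const, nsmul_eq_mul, mul_comm]
  -- lower bound on the norm sum
  have hNlb : (m:ℝ) * flog n / 2 ≤ ∑ i ∈ Finset.Icc 1 n, ‖vecOf e (x' i)‖ := by
    rw [hNeq]
    have step : ∀ j ∈ Finset.univ, (m:ℝ) * flog n / (2*(n:ℝ)) * ((E j).card : ℝ)
        ≤ lam j * ((E j).card : ℝ) := by
      intro j _
      apply mul_le_mul_of_nonneg_right (hlamlb j) (by positivity)
    calc (m:ℝ) * flog n / 2
        = ∑ j : Fin m, (m:ℝ) * flog n / (2*(n:ℝ)) * ((E j).card : ℝ) := by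
          rw [← Finset.mul_sum]
          have : ∑ j : Fin m, ((E j).card : ℝ) = (n:ℝ) := by
            rw [← Nat.cast_sum]
            exact_mod_cast congrArg (Nat.cast : ℕ → ℝ) hcardsum
          rw [this]
          field_simp
      _ ≤ ∑ j, lam j * ((E j).card : ℝ) := Finset.sum_le_sum step
  -- lower bound on ‖∑ z‖
  have hZlb : (m:ℝ)/2 ≤ ‖∑ j, lam j • w j‖ := by
    rw [← hZeq]
    calc (m:ℝ)/2 = (1/flog n) * ((m:ℝ) * flog n / 2) := by
          field_simp
      _ ≤ (1/flog n) * ∑ i ∈ Finset.Icc 1 n, ‖vecOf e (x' i)‖ := by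
          apply mul_le_mul_of_nonneg_left hNlb (by positivity)
      _ ≤ _ := hb
  -- upper bound on ‖∑ y‖
  have hYub : ‖∑ i, vecOf e (y i)‖ ≤ ε * (m:ℝ) / 12 := by
    have hinv : (flog m)⁻¹ ≤ ε / 24 := by
      have h24 : (0:ℝ) < 24/ε := by positivity
      have h0 := inv_anti₀ h24 hfm
      have : (24/ε)⁻¹ = ε/24 := by field_simp
      linarith [h0, this.symm.le, this.le]
    calc ‖∑ i, vecOf e (y i)‖ ≤ 2 * (m:ℝ) * (flog m)⁻¹ := hyRIS
      _ ≤ 2 * (m:ℝ) * (ε/24) := by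
          apply mul_le_mul_of_nonneg_left hinv (by positivity)
      _ = ε * (m:ℝ) / 12 := by ring
  constructor
  · calc ‖∑ i, vecOf e (y i)‖ ≤ ε * (m:ℝ) / 12 := hYub
      _ ≤ ε * ((m:ℝ)/2) := by nlinarith
      _ ≤ ε * ‖∑ j, lam j • w j‖ := by
          apply mul_le_mul_of_nonneg_left hZlb hε.le
  · rintro ⟨c, hc, h⟩
    have h1 := h (fun _ => 1)
    simp only [one_smul] at h1
    set i₀ : Fin m := ⟨0, hm⟩ with hi₀
    have h2 := h (fun i => if i = i₀ then 1 else 0)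
    simp only [ite_smul, one_smul, zero_smul, Finset.sum_ite_eq', Finset.mem_univ,
      if_true] at h2
    have hc1 : c ≤ 1 := by
      have := h2.1
      rw [hy1 i₀, hz1 i₀, mul_one] at this
      exact this
    have hY0 : (0:ℝ) ≤ ‖∑ i, vecOf e (y i)‖ := norm_nonneg _
    have hstep : c * ‖∑ i, vecOf e (y i)‖ ≤ ε * (m:ℝ) / 12 := by
      calc c * ‖∑ i, vecOf e (y i)‖ ≤ 1 * ‖∑ i, vecOf e (y i)‖ :=
            mul_le_mul_of_nonneg_right hc1 hY0
        _ = ‖∑ i, vecOf e (y i)‖ := one_mul _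
        _ ≤ ε * (m:ℝ) / 12 := hYub
    have hfinal : ‖∑ j, lam j • w j‖ ≤ (m:ℝ)/12 := by
      calc ‖∑ j, lam j • w j‖ ≤ ε⁻¹ * c * ‖∑ i, vecOf e (y i)‖ := h1.2
        _ = ε⁻¹ * (c * ‖∑ i, vecOf e (y i)‖) := by ring
        _ ≤ ε⁻¹ * (ε * (m:ℝ) / 12) := by
            apply mul_le_mul_of_nonneg_left hstep (by positivity)
        _ = (m:ℝ)/12 := by field_simp
    linarith [hZlb]
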